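/- In the one-signal, one-background contrastive factor model, along a sequence of models with d = d(n) and d/n → c ∈ (0, ∞) as n → ∞, one has e_1ᵀ S_n^+ e_1 → λ_{A,1} almost surely. -/

import Mathlib

/-!
Only the first coordinates of `x_i` and `x_i⁺` enter `e₁ᵀ S_n⁺ e₁`, which equals
`(1/n) ∑_{i<n} (√λ_{A,1} w_i + ε_{i,1}) (√λ_{A,1} w_i + ε'_{i,1})`. The summands are built from
disjoint blocks of the i.i.d. Gaussian sources, hence are i.i.d., and by independence and centring
their mean is `λ_{A,1} 𝔼[w²] = λ_{A,1}`; the strong law of large numbers concludes.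
-/

open MeasureTheory ProbabilityTheory Matrix Filter
open scoped Topology

noncomputable section

/-- Index type for the independent scalar Gaussian sources of the contrastive factor model:
signal factors `w`, background factors `h`, `h'`, and noises `ε`, `ε'`. -/
abbrev CIdx (k m : ℕ) : Type :=
  (Fin k × ℕ) ⊕ ((Fin m × ℕ) ⊕ ((Fin m × ℕ) ⊕ ((ℕ × ℕ) ⊕ (ℕ × ℕ))))

variable {Ω : Type*} [MeasurableSpace Ω]

/-- signal factor `w_{j,i}` (the `j`-th coordinate of the shared signal factor of sample `i`). -/
def wF {k m : ℕ} (ξ : CIdx k m → Ω → ℝ) (j : Fin k) (i : ℕ) : Ω → ℝ := ξ (.inl (j, i))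
/-- background factor `h_{j,i}`. -/
def hF {k m : ℕ} (ξ : CIdx k m → Ω → ℝ) (j : Fin m) (i : ℕ) : Ω → ℝ := ξ (.inr (.inl (j, i)))
/-- background factor `h'_{j,i}`. -/
def hF' {k m : ℕ} (ξ : CIdx k m → Ω → ℝ) (j : Fin m) (i : ℕ) : Ω → ℝ :=
  ξ (.inr (.inr (.inl (j, i))))
/-- noise `ε_{i,l}` (coordinate `l` of the noise of sample `i`). -/
def eF {k m : ℕ} (ξ : CIdx k m → Ω → ℝ) (i l : ℕ) : Ω → ℝ := ξ (.inr (.inr (.inr (.inl (i, l)))))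
/-- noise `ε'_{i,l}`. -/
def eF' {k m : ℕ} (ξ : CIdx k m → Ω → ℝ) (i l : ℕ) : Ω → ℝ := ξ (.inr (.inr (.inr (.inr (i, l)))))

/-- The data matrix `X` with rows `x_i = A w_i + B h_i + ε_i`, where
`A = [√λ_{A,1} v_{A,1}, …, √λ_{A,k} v_{A,k}]` and `B = [√λ_{B,1} v_{B,1}, …, √λ_{B,m} v_{B,m}]`. -/
def Xmat {k m : ℕ} (ξ : CIdx k m → Ω → ℝ) (lamA : Fin k → ℝ) (lamB : Fin m → ℝ)
    {dd : ℕ} (vA : Fin k → Fin dd → ℝ) (vB : Fin m → Fin dd → ℝ) (n : ℕ) (ω : Ω) :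
    Matrix (Fin n) (Fin dd) ℝ :=
  fun i l =>
    (∑ j, Real.sqrt (lamA j) * vA j l * wF ξ j i ω)
    + (∑ j, Real.sqrt (lamB j) * vB j l * hF ξ j i ω)
    + eF ξ i l ω

/-- The data matrix `X⁺` with rows `x_i⁺ = A w_i + B h_i' + ε_i'`. -/
def XmatP {k m : ℕ} (ξ : CIdx k m → Ω → ℝ) (lamA : Fin k → ℝ) (lamB : Fin m → ℝ)
    {dd : ℕ} (vA : Fin k → Fin dd → ℝ) (vB : Fin m → Fin dd → ℝ) (n : ℕ) (ω : Ω) :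
    Matrix (Fin n) (Fin dd) ℝ :=
  fun i l =>
    (∑ j, Real.sqrt (lamA j) * vA j l * wF ξ j i ω)
    + (∑ j, Real.sqrt (lamB j) * vB j l * hF' ξ j i ω)
    + eF' ξ i l ω

/-- Contrastive covariance `S_n⁺ = (1/(2n)) (Xᵀ X⁺ + X⁺ᵀ X)`. -/
def Snplus {k m : ℕ} (ξ : CIdx k m → Ω → ℝ) (lamA : Fin k → ℝ) (lamB : Fin m → ℝ)
    {dd : ℕ} (vA : Fin k → Fin dd → ℝ) (vB : Fin m → Fin dd → ℝ) (n : ℕ) (ω : Ω) :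
    Matrix (Fin dd) (Fin dd) ℝ :=
  (1 / (2 * (n : ℝ))) •
    ((Xmat ξ lamA lamB vA vB n ω)ᵀ * (XmatP ξ lamA lamB vA vB n ω)
      + (XmatP ξ lamA lamB vA vB n ω)ᵀ * (Xmat ξ lamA lamB vA vB n ω))

/-- Sample covariance `S_n = (1/n) Xᵀ X`. -/
def Sn {k m : ℕ} (ξ : CIdx k m → Ω → ℝ) (lamA : Fin k → ℝ) (lamB : Fin m → ℝ)
    {dd : ℕ} (vA : Fin k → Fin dd → ℝ) (vB : Fin m → Fin dd → ℝ) (n : ℕ) (ω : Ω) :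
    Matrix (Fin dd) (Fin dd) ℝ :=
  ((n : ℝ)⁻¹) • ((Xmat ξ lamA lamB vA vB n ω)ᵀ * (Xmat ξ lamA lamB vA vB n ω))

/-- `dist(U, U') = ‖P − P'‖_op`: operator-norm distance between the matrices `P`, `Q`
(orthogonal projections onto the two subspaces), viewed as operators on Euclidean space. -/
def opDist {dd : ℕ} (P Q : Matrix (Fin dd) (Fin dd) ℝ) : ℝ :=
  ‖Matrix.toEuclideanCLM (𝕜 := ℝ) (P - Q)‖

/-- The standard basis vector `e_{l₀}` of `ℝ^d` (as a function `Fin d → ℝ`). -/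
def stdBasis (dd l₀ : ℕ) : Fin dd → ℝ := fun l => if (l : ℕ) = l₀ then 1 else 0

namespace ProbabilityTheory

variable {ι κ α β : Type*} [MeasurableSpace β] {μ : Measure Ω} {ξ : ι → Ω → β}

lemma iIndepFun.map_block_eq_pi [Fintype κ] (hmeas : ∀ i, Measurable (ξ i))
    (hindep : iIndepFun ξ μ) {t : κ → ι} (ht : Function.Injective t) :
    μ.map (fun ω k => ξ (t k) ω) = Measure.pi fun k => μ.map (ξ (t k)) :=
  (hindep.precomp ht).map_fun_eq_pi_map fun k => (hmeas (t k)).aemeasurable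

lemma iIndepFun.indepFun_blocks [Fintype κ] (hmeas : ∀ i, Measurable (ξ i))
    (hindep : iIndepFun ξ μ) {t : α × κ → ι} (ht : Function.Injective t) :
    Pairwise fun a b =>
      IndepFun (fun ω k => ξ (t (a, k)) ω) (fun ω k => ξ (t (b, k)) ω) μ := by
  classical
  intro a b hab
  let S : α → Finset ι := fun a => Finset.univ.image fun k => t (a, k)
  have hS : Disjoint (S a) (S b) := by
    simp only [S, Finset.disjoint_left, Finset.mem_image, Finset.mem_univ, true_and]
    rintro _ ⟨k, rfl⟩ ⟨l, hl⟩
    exact hab (congrArg Prod.fst (ht hl)).symm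
  let restrict : (a : α) → (S a → β) → κ → β := fun a v k =>
    v ⟨t (a, k), Finset.mem_image_of_mem _ (Finset.mem_univ k)⟩
  have hrestrict : ∀ a, Measurable (restrict a) := fun a =>
    measurable_pi_lambda _ fun k => measurable_pi_apply _
  exact (hindep.indepFun_finset (S a) (S b) hS hmeas).comp (hrestrict a) (hrestrict b)

theorem iIndepFun.tendsto_average_comp_blocks [Fintype κ] (hmeas : ∀ i, Measurable (ξ i))
    (hindep : iIndepFun ξ μ) {ν : Measure β} (hlaw : ∀ i, μ.map (ξ i) = ν)
    {t : ℕ × κ → ι} (ht : Function.Injective t) {φ : (κ → β) → ℝ} (hφ : Measurable φ)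
    (hint : Integrable (fun ω => φ fun k => ξ (t (0, k)) ω) μ) :
    ∀ᵐ ω ∂μ, Tendsto (fun n : ℕ => (∑ i ∈ Finset.range n, φ fun k => ξ (t (i, k)) ω) / n)
      atTop (𝓝 (∫ ω, φ (fun k => ξ (t (0, k)) ω) ∂μ)) := by
  have hinj : ∀ i, Function.Injective fun k => t (i, k) := fun i k l h =>
    congrArg Prod.snd (ht h)
  have hblock : ∀ i, Measurable fun ω k => ξ (t (i, k)) ω := fun i =>
    measurable_pi_lambda _ fun k => hmeas _
  refine strong_law_ae_real _ hint
    (fun i j hij => (hindep.indepFun_blocks hmeas ht hij).comp hφ hφ) fun i => ?_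
  refine IdentDistrib.comp ⟨(hblock i).aemeasurable, (hblock 0).aemeasurable, ?_⟩ hφ
  simp only [hindep.map_block_eq_pi hmeas (hinj _), hlaw]

lemma HasLaw.memLp_of_gaussianReal {X : Ω → ℝ} {m : ℝ} {v : NNReal}
    (hX : HasLaw X (gaussianReal m v) μ) {p : ENNReal} (hp : p ≠ ⊤) : MemLp X p μ :=
  (memLp_map_measure_iff aestronglyMeasurable_id hX.aemeasurable).1
    (hX.map_eq ▸ memLp_id_gaussianReal' p hp)

lemma HasLaw.integral_eq_of_gaussianReal {X : Ω → ℝ} {m : ℝ} {v : NNReal}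
    (hX : HasLaw X (gaussianReal m v) μ) : μ[X] = m :=
  hX.integral_eq.trans integral_id_gaussianReal

lemma HasLaw.integral_sq_of_gaussianReal [IsProbabilityMeasure μ] {X : Ω → ℝ} {m : ℝ}
    {v : NNReal} (hX : HasLaw X (gaussianReal m v) μ) : μ[X ^ 2] = v + m ^ 2 := by
  have hvar := variance_eq_sub (hX.memLp_of_gaussianReal (p := 2) ENNReal.ofNat_ne_top)
  rw [hX.variance_eq, variance_id_gaussianReal, hX.integral_eq_of_gaussianReal] at hvar
  linarith

lemma integral_mul_add_mul_add_of_indepFun [IsFiniteMeasure μ] {X Y Z : Ω → ℝ}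
    (hX : MemLp X 2 μ) (hY : MemLp Y 2 μ) (hZ : MemLp Z 2 μ) (hXY : IndepFun X Y μ)
    (hXZ : IndepFun X Z μ) (hYZ : IndepFun Y Z μ) (hY0 : μ[Y] = 0) (hZ0 : μ[Z] = 0) (s : ℝ) :
    ∫ ω, (s * X ω + Y ω) * (s * X ω + Z ω) ∂μ = s ^ 2 * μ[X ^ 2] := by
  have hexpand : (fun ω => (s * X ω + Y ω) * (s * X ω + Z ω))
      = fun ω => s ^ 2 * (X ^ 2) ω + (s * (X * Z) ω + (s * (X * Y) ω + (Y * Z) ω)) := by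
    ext ω; simp only [Pi.mul_apply, Pi.pow_apply]; ring
  have hXX : Integrable (X ^ 2) μ := hX.integrable_sq
  have hXZi : Integrable (X * Z) μ := hX.integrable_mul hZ
  have hXYi : Integrable (X * Y) μ := hX.integrable_mul hY
  have hYZi : Integrable (Y * Z) μ := hY.integrable_mul hZ
  rw [hexpand, integral_add, integral_add, integral_add, integral_const_mul, integral_const_mul,
    integral_const_mul, hXZ.integral_mul_eq_mul_integral hX.1 hZ.1,
    hXY.integral_mul_eq_mul_integral hX.1 hY.1, hYZ.integral_mul_eq_mul_integral hY.1 hZ.1,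
    hY0, hZ0]
  · ring
  all_goals fun_prop

end ProbabilityTheory

lemma stdBasis_eq_single {dd l : ℕ} (hl : l < dd) : stdBasis dd l = Pi.single ⟨l, hl⟩ 1 := by
  ext j
  simp [_root_.stdBasis, Pi.single_apply, Fin.ext_iff]

lemma stdBasis_dotProduct_mulVec_stdBasis {dd l : ℕ} (hl : l < dd)
    (M : Matrix (Fin dd) (Fin dd) ℝ) :
    stdBasis dd l ⬝ᵥ M *ᵥ stdBasis dd l = M ⟨l, hl⟩ ⟨l, hl⟩ := by
  rw [stdBasis_eq_single hl, mulVec_single_one, single_one_dotProduct]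
  rfl

section

variable {Ω : Type*}

lemma Snplus_apply_self {k m dd : ℕ} (ξ : CIdx k m → Ω → ℝ) (lamA : Fin k → ℝ)
    (lamB : Fin m → ℝ) (vA : Fin k → Fin dd → ℝ) (vB : Fin m → Fin dd → ℝ) (n : ℕ) (ω : Ω)
    (l : Fin dd) :
    Snplus ξ lamA lamB vA vB n ω l l
      = (∑ i, Xmat ξ lamA lamB vA vB n ω i l * XmatP ξ lamA lamB vA vB n ω i l) / n := by
  simp only [Snplus, Matrix.smul_apply, Matrix.add_apply, mul_apply, transpose_apply, smul_eq_mul]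
  simp only [mul_comm (XmatP ξ lamA lamB vA vB n ω _ l), ← two_mul]
  field_simp

variable {ξ : CIdx 1 1 → Ω → ℝ} {a b : ℝ} {dd n : ℕ} {ω : Ω}

lemma Xmat_apply_zero (h : 0 < dd) (i : Fin n) :
    Xmat ξ (fun _ => a) (fun _ => b) (fun _ => stdBasis dd 0) (fun _ => stdBasis dd 1) n ω
      i ⟨0, h⟩ = √a * wF ξ 0 i ω + eF ξ i 0 ω := by
  simp [Xmat, _root_.stdBasis]

lemma XmatP_apply_zero (h : 0 < dd) (i : Fin n) :
    XmatP ξ (fun _ => a) (fun _ => b) (fun _ => stdBasis dd 0) (fun _ => stdBasis dd 1) n ω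
      i ⟨0, h⟩ = √a * wF ξ 0 i ω + eF' ξ i 0 ω := by
  simp [XmatP, _root_.stdBasis]

lemma stdBasis_dotProduct_Snplus_mulVec_stdBasis (h : 0 < dd) :
    stdBasis dd 0 ⬝ᵥ (Snplus ξ (fun _ => a) (fun _ => b) (fun _ => stdBasis dd 0)
        (fun _ => stdBasis dd 1) n ω) *ᵥ stdBasis dd 0
      = (∑ i ∈ Finset.range n,
          (√a * wF ξ 0 i ω + eF ξ i 0 ω) * (√a * wF ξ 0 i ω + eF' ξ i 0 ω)) / n := by
  rw [stdBasis_dotProduct_mulVec_stdBasis h, Snplus_apply_self,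
    ← Fin.sum_univ_eq_sum_range (fun i =>
      (√a * wF ξ 0 i ω + eF ξ i 0 ω) * (√a * wF ξ 0 i ω + eF' ξ i 0 ω))]
  simp only [Xmat_apply_zero, XmatP_apply_zero]

end

theorem snplus_quadform_e1_tendsto_general
    (μ : Measure Ω) [IsProbabilityMeasure μ]
    (lamA1 lamB1 : ℝ) (hlamA1 : 0 < lamA1)
    (d : ℕ → ℕ) (hd2 : ∀ n, 2 ≤ d n)
    (ξ : CIdx 1 1 → Ω → ℝ)
    (hmeas : ∀ i, Measurable (ξ i))
    (hindep : iIndepFun ξ μ)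
    (hGauss : ∀ i, Measure.map (ξ i) μ = gaussianReal 0 1) :
    ∀ᵐ ω ∂μ,
      Filter.Tendsto
        (fun n : ℕ =>
          stdBasis (d n) 0 ⬝ᵥ
            (Snplus ξ (fun _ => lamA1) (fun _ => lamB1)
              (fun _ => stdBasis (d n) 0) (fun _ => stdBasis (d n) 1) n ω).mulVec
              (stdBasis (d n) 0))
        atTop (nhds lamA1) := by
  have hlaw : ∀ u, HasLaw (ξ u) (gaussianReal 0 1) μ := fun u => ⟨(hmeas u).aemeasurable, hGauss u⟩
  have hL2 : ∀ u, MemLp (ξ u) 2 μ := fun u => (hlaw u).memLp_of_gaussianReal ENNReal.ofNat_ne_top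
  -- the three sources `w_i`, `ε_{i,1}`, `ε'_{i,1}` that enter the first coordinates of `x_i`, `x_i⁺`
  let t : ℕ × Fin 3 → CIdx 1 1 := fun p =>
    ![.inl (0, p.1), .inr (.inr (.inr (.inl (p.1, 0)))), .inr (.inr (.inr (.inr (p.1, 0))))] p.2
  have ht : Function.Injective t := by
    rintro ⟨i, k⟩ ⟨j, l⟩ h
    fin_cases k <;> fin_cases l <;> simp_all [t]
  let φ : (Fin 3 → ℝ) → ℝ := fun v => (√lamA1 * v 0 + v 1) * (√lamA1 * v 0 + v 2)
  have hφ : Measurable φ := by fun_prop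
  have hint : Integrable (fun ω => φ fun k => ξ (t (0, k)) ω) μ :=
    (((hL2 _).const_mul _).add (hL2 _)).integrable_mul (((hL2 _).const_mul _).add (hL2 _))
  have hmean : ∫ ω, φ (fun k => ξ (t (0, k)) ω) ∂μ = lamA1 := by
    rw [integral_mul_add_mul_add_of_indepFun (hL2 _) (hL2 _) (hL2 _)
      (hindep.indepFun (by simp [t])) (hindep.indepFun (by simp [t]))
      (hindep.indepFun (by simp [t])) (hlaw _).integral_eq_of_gaussianReal
      (hlaw _).integral_eq_of_gaussianReal, (hlaw _).integral_sq_of_gaussianReal,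
      Real.sq_sqrt hlamA1.le]
    simp
  filter_upwards [hindep.tendsto_average_comp_blocks hmeas hGauss ht hφ hint] with ω hω
  rw [hmean] at hω
  refine hω.congr fun n => ?_
  rw [stdBasis_dotProduct_Snplus_mulVec_stdBasis (zero_lt_two.trans_le (hd2 n))]
  rfl

/-- In the one-signal, one-background contrastive factor model, along a sequence of models
with `d = d(n)` and `d/n → c ∈ (0,∞)`, one has `e₁ᵀ S_n⁺ e₁ → λ_{A,1}` almost surely. -/
theorem snplus_quadform_e1_tendsto
    (μ : Measure Ω) [IsProbabilityMeasure μ]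
    (lamA1 lamB1 : ℝ) (hlamA1 : 0 < lamA1) (hlamB1 : 0 < lamB1)
    (d : ℕ → ℕ) (hd2 : ∀ n, 2 ≤ d n)
    (c : ℝ) (hc : 0 < c)
    (hdn : Filter.Tendsto (fun n : ℕ => (d n : ℝ) / n) atTop (nhds c))
    (ξ : CIdx 1 1 → Ω → ℝ)
    (hmeas : ∀ i, Measurable (ξ i))
    (hindep : iIndepFun ξ μ)
    (hGauss : ∀ i, Measure.map (ξ i) μ = gaussianReal 0 1) :
    ∀ᵐ ω ∂μ,
      Filter.Tendsto
        (fun n : ℕ =>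
          stdBasis (d n) 0 ⬝ᵥ
            (Snplus ξ (fun _ => lamA1) (fun _ => lamB1)
              (fun _ => stdBasis (d n) 0) (fun _ => stdBasis (d n) 1) n ω).mulVec
              (stdBasis (d n) 0))
        atTop (nhds lamA1) :=
  snplus_quadform_e1_tendsto_general μ lamA1 lamB1 hlamA1 d hd2 ξ hmeas hindep hGauss
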